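/- Let n ≥ 1, 1 < p < ∞, 1 ≤ q < ∞, 0 ≤ m' < 1/2, m > 1, and C₀ > 0. Let (u_{j,j_s})_{j,j_s∈ℤ} and (F_{j',j_t})_{j',j_t∈ℤ} be families of measurable functions ℝⁿ → [0,∞] such that for all j_t ∈ ℤ, all j' ≤ j_t, and every x ∈ ℝⁿ, F_{j',j_t}(x) ≤ C₀ · Σ_{j≥j'−2} Σ_{j_t≤j_s≤j} 2^{j'−j} · 2^{2(j−j_s)(1−m)} · M u_{j,j_s}(x). Then there exists a constant C > 0, depending only on n, p, q, m', m, C₀, such that sup_{j_t∈ℤ} Σ_{j'≤j_t} ( 2^{2(j'−j_t)m'} · 2^{j'(n/p−1)} · ‖F_{j',j_t}‖_{L^{p,∞}} )^q ≤ C · sup_{j_s∈ℤ} Σ_{j≥j_s} ( 2^{2(j−j_s)m} · 2^{j(n/p−1)} · ‖u_{j,j_s}‖_{L^{p,∞}} )^q. -/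

import Mathlib

/-!
The maximal operator is bounded on weak `L^p` for `p > 1`: cutting `g` at half the level, the
part above the cut has its integral controlled by the weak norm through a dyadic layer
decomposition, and the weak type `(1,1)` bound for that part comes from the Vitali covering lemma.

Weak `L^p` is only a quasi-normed space, but `h ≤ ∑ Gᵢ` pointwise and `∑ θᵢ ≤ 1` give
`‖h‖^p ≤ ∑ (‖Gᵢ‖ / θᵢ)^p`; with geometric weights this lets a pointwise bound by a geometrically
decaying series pass to weak norms. Writing `js = jt + a`, `j = js + b` and `β = n/p`, the weights
of the hypothesis and of the two sides combine (thanks to `m ≥ 1/2` and `m' ≥ 0`) into a decay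
`2^{-β(a + b + (jt - j'))}`, so summing first over `(a, b)` and then the `q`-th powers over
`j' ≤ jt` leaves only geometric series.
-/

open MeasureTheory ENNReal

/-- The Hardy–Littlewood maximal function of `g : ℝⁿ → [0,∞]`. -/
noncomputable def maxFn (n : ℕ) (g : EuclideanSpace ℝ (Fin n) → ℝ≥0∞)
    (x : EuclideanSpace ℝ (Fin n)) : ℝ≥0∞ :=
  ⨆ (r : ℝ) (_ : 0 < r), (∫⁻ y in Metric.ball x r, g y) / volume (Metric.ball x r)

/-- The weak-`L^p` quasinorm `sup_{λ>0} λ |{x : h x > λ}|^{1/p}` of `h : ℝⁿ → [0,∞]`. -/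
noncomputable def wLp (n : ℕ) (p : ℝ) (h : EuclideanSpace ℝ (Fin n) → ℝ≥0∞) : ℝ≥0∞ :=
  ⨆ (l : NNReal) (_ : 0 < l), (l : ℝ≥0∞) * (volume {x | (l : ℝ≥0∞) < h x}) ^ (1 / p)

open Metric Set

theorem inv_one_sub_two_rpow_ne_top {x : ℝ} (hx : x < 0) : (1 - (2 : ℝ≥0∞) ^ x)⁻¹ ≠ ∞ :=
  ENNReal.inv_ne_top.2
    (tsub_pos_of_lt (ENNReal.rpow_lt_one_of_one_lt_of_neg one_lt_two hx)).ne'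

section WeakLp

variable {n : ℕ} {p : ℝ}

theorem volume_lt_le_wLp_div_rpow (hp : 0 < p) (g : EuclideanSpace ℝ (Fin n) → ℝ≥0∞)
    {t : ℝ≥0∞} (ht : t ≠ 0) : volume {x | t < g x} ≤ (wLp n p g / t) ^ p := by
  rcases eq_or_ne t ∞ with rfl | htop
  · simp
  lift t to NNReal using htop
  have hle : (t : ℝ≥0∞) * volume {x | (t : ℝ≥0∞) < g x} ^ (1 / p) ≤ wLp n p g :=
    le_iSup₂_of_le t (pos_iff_ne_zero.2 (by exact_mod_cast ht)) le_rfl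
  calc volume {x | (t : ℝ≥0∞) < g x}
      = (volume {x | (t : ℝ≥0∞) < g x} ^ (1 / p)) ^ p := by
        rw [← ENNReal.rpow_mul, one_div_mul_cancel hp.ne', ENNReal.rpow_one]
    _ ≤ (wLp n p g / t) ^ p := by
        gcongr
        rwa [ENNReal.le_div_iff_mul_le (.inl ht) (.inl coe_ne_top), mul_comm]

theorem wLp_le_of_volume_lt_le (hp : 0 < p) {g : EuclideanSpace ℝ (Fin n) → ℝ≥0∞}
    {B : ℝ≥0∞} (hg : ∀ l : ℝ≥0∞, l ≠ 0 → l ≠ ∞ → volume {x | l < g x} ≤ (B / l) ^ p) :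
    wLp n p g ≤ B := by
  refine iSup₂_le fun l hl => ?_
  calc (l : ℝ≥0∞) * volume {x | (l : ℝ≥0∞) < g x} ^ (1 / p)
      ≤ l * ((B / l) ^ p) ^ (1 / p) := by
        gcongr
        exact hg l (by exact_mod_cast hl.ne') coe_ne_top
    _ = l * (B / l) := by
        rw [← ENNReal.rpow_mul, mul_one_div_cancel hp.ne', ENNReal.rpow_one]
    _ ≤ B := ENNReal.mul_div_le

theorem wLp_const_mul_le (hp : 0 < p) (g : EuclideanSpace ℝ (Fin n) → ℝ≥0∞) {c : ℝ≥0∞}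
    (hc : c ≠ ∞) : wLp n p (fun x => c * g x) ≤ c * wLp n p g := by
  refine wLp_le_of_volume_lt_le hp fun l hl0 hl => ?_
  rcases eq_or_ne c 0 with rfl | hc0
  · simp
  have hset : {x | l < c * g x} = {x | l / c < g x} := by
    ext x
    simp only [mem_ofPred_eq, ENNReal.div_lt_iff (.inl hc0) (.inl hc), mul_comm]
  calc volume {x | l < c * g x} ≤ (wLp n p g / (l / c)) ^ p := by
        rw [hset]
        exact volume_lt_le_wLp_div_rpow hp g (ENNReal.div_ne_zero.2 ⟨hl0, hc⟩)
    _ = (c * wLp n p g / l) ^ p := by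
        rw [ENNReal.div_eq_inv_mul, ENNReal.div_eq_inv_mul, ENNReal.div_eq_inv_mul,
          ENNReal.mul_inv (.inl (ENNReal.inv_ne_zero.2 hc)) (.inl (ENNReal.inv_ne_top.2 hc0)),
          inv_inv, mul_comm l⁻¹, mul_assoc, mul_assoc, mul_comm l⁻¹]

theorem wLp_le_tsum_div_rpow (hp : 0 < p) {ι : Type*} [Countable ι] {θ : ι → ℝ≥0∞}
    (hθ0 : ∀ i, θ i ≠ 0) (hθ : ∑' i, θ i ≤ 1) {h : EuclideanSpace ℝ (Fin n) → ℝ≥0∞}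
    {G : ι → EuclideanSpace ℝ (Fin n) → ℝ≥0∞} (hh : ∀ x, h x ≤ ∑' i, G i x) :
    wLp n p h ≤ (∑' i, (wLp n p (G i) / θ i) ^ p) ^ (1 / p) := by
  refine wLp_le_of_volume_lt_le hp fun l hl0 hl => ?_
  have hcover : {x | l < h x} ⊆ ⋃ i, {x | θ i * l < G i x} := by
    intro x hx
    by_contra hx'
    simp only [mem_iUnion, mem_ofPred_eq, not_exists, not_lt] at hx'
    have : h x ≤ l := calc
      h x ≤ ∑' i, θ i * l := (hh x).trans (ENNReal.tsum_le_tsum hx')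
      _ = (∑' i, θ i) * l := ENNReal.tsum_mul_right
      _ ≤ l := mul_le_of_le_one_left' hθ
    exact not_lt.2 this hx
  calc volume {x | l < h x} ≤ ∑' i, volume {x | θ i * l < G i x} :=
        (measure_mono hcover).trans (measure_iUnion_le _)
    _ ≤ ∑' i, (wLp n p (G i) / (θ i * l)) ^ p := ENNReal.tsum_le_tsum fun i =>
        volume_lt_le_wLp_div_rpow hp _ (mul_ne_zero (hθ0 i) hl0)
    _ = ((∑' i, (wLp n p (G i) / θ i) ^ p) ^ (1 / p) / l) ^ p := by
        rw [ENNReal.div_rpow_of_nonneg _ _ hp.le, ← ENNReal.rpow_mul, one_div_mul_cancel hp.ne',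
          ENNReal.rpow_one, ENNReal.div_eq_inv_mul, ← ENNReal.tsum_mul_left]
        refine tsum_congr fun i => ?_
        rw [← ENNReal.inv_rpow, ← ENNReal.mul_rpow_of_nonneg _ _ hp.le, ENNReal.div_eq_inv_mul,
          ENNReal.div_eq_inv_mul, ENNReal.mul_inv (.inl (hθ0 i)) (.inr hl0),
          mul_comm (θ i)⁻¹, mul_assoc]

theorem exists_wLp_le_of_le_tsum_geometric (hp : 0 < p) {r : ℝ≥0∞} (hr : r < 1) :
    ∃ C : ℝ≥0∞, C ≠ ∞ ∧ ∀ (h : EuclideanSpace ℝ (Fin n) → ℝ≥0∞)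
      (G : ℕ → EuclideanSpace ℝ (Fin n) → ℝ≥0∞) (B : ℝ≥0∞),
      (∀ x, h x ≤ ∑' k, G k x) → (∀ k, wLp n p (G k) ≤ B * r ^ k) → wLp n p h ≤ C * B := by
  -- weights `θ k = (1 - s) * s ^ k` with `r ≤ s ^ 2` sum to `1` and leave the decay `s ^ k`
  obtain ⟨s, hrs, hs1⟩ :=
    exists_between (ENNReal.rpow_lt_one hr (by norm_num : (0 : ℝ) < 1 / 2))
  have hs0 : s ≠ 0 := (pos_of_gt hrs).ne'
  have hr_le : r ≤ s * s := by
    calc r = r ^ (1 / 2 : ℝ) * r ^ (1 / 2 : ℝ) := by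
          rw [← ENNReal.rpow_add_of_nonneg _ _ (by norm_num) (by norm_num)]; norm_num
      _ ≤ s * s := by gcongr
  have h1s0 : 1 - s ≠ 0 := (tsub_pos_of_lt hs1).ne'
  have h1s : 1 - s ≠ ∞ := ENNReal.sub_ne_top one_ne_top
  refine ⟨(1 - s)⁻¹ * ((1 - s ^ p)⁻¹) ^ (1 / p), ?_, fun h G B hh hG => ?_⟩
  · refine ENNReal.mul_ne_top (ENNReal.inv_ne_top.2 h1s0)
      (ENNReal.rpow_ne_top_of_nonneg (by positivity) (ENNReal.inv_ne_top.2 ?_))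
    exact (tsub_pos_of_lt (ENNReal.rpow_lt_one hs1 hp)).ne'
  have hθ : ∑' k : ℕ, (1 - s) * s ^ k ≤ 1 := by
    rw [ENNReal.tsum_mul_left, ENNReal.tsum_geometric, ENNReal.mul_inv_cancel h1s0 h1s]
  refine (wLp_le_tsum_div_rpow hp (fun k => mul_ne_zero h1s0 (pow_ne_zero k hs0)) hθ hh).trans ?_
  have hterm : ∀ k, wLp n p (G k) / ((1 - s) * s ^ k) ≤ B * (1 - s)⁻¹ * s ^ k := fun k => by
    refine ENNReal.div_le_of_le_mul ((hG k).trans ?_)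
    calc B * r ^ k ≤ B * (s ^ k * s ^ k) := by rw [← mul_pow]; gcongr
      _ = B * (1 - s)⁻¹ * s ^ k * ((1 - s) * s ^ k) := by
        rw [show B * (1 - s)⁻¹ * s ^ k * ((1 - s) * s ^ k)
            = B * ((1 - s)⁻¹ * (1 - s)) * (s ^ k * s ^ k) by ring,
          ENNReal.inv_mul_cancel h1s0 h1s, mul_one]
  have hp' : 0 ≤ 1 / p := by positivity
  calc (∑' k, (wLp n p (G k) / ((1 - s) * s ^ k)) ^ p) ^ (1 / p)
      ≤ (∑' k : ℕ, (B * (1 - s)⁻¹ * s ^ k) ^ p) ^ (1 / p) := by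
        gcongr with k
        exact hterm k
    _ = B * (1 - s)⁻¹ * ((1 - s ^ p)⁻¹) ^ (1 / p) := by
        simp_rw [ENNReal.mul_rpow_of_nonneg _ _ hp.le, ← ENNReal.rpow_natCast,
          ← ENNReal.rpow_mul, mul_comm _ p, ENNReal.rpow_mul, ENNReal.rpow_natCast,
          ENNReal.tsum_mul_left, ENNReal.tsum_geometric]
        rw [ENNReal.mul_rpow_of_nonneg _ _ hp', ENNReal.mul_rpow_of_nonneg _ _ hp',
          ← ENNReal.rpow_mul, ← ENNReal.rpow_mul, mul_one_div_cancel hp.ne', ENNReal.rpow_one,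
          ENNReal.rpow_one]
    _ = (1 - s)⁻¹ * ((1 - s ^ p)⁻¹) ^ (1 / p) * B := by ring

theorem exists_wLp_le_of_le_tsum_tsum_geometric (hp : 0 < p) {r : ℝ≥0∞} (hr : r < 1) :
    ∃ C : ℝ≥0∞, C ≠ ∞ ∧ ∀ (h : EuclideanSpace ℝ (Fin n) → ℝ≥0∞)
      (G : ℕ → ℕ → EuclideanSpace ℝ (Fin n) → ℝ≥0∞) (B : ℝ≥0∞),
      (∀ x, h x ≤ ∑' a, ∑' b, G a b x) → (∀ a b, wLp n p (G a b) ≤ B * r ^ a * r ^ b) →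
      wLp n p h ≤ C * B := by
  obtain ⟨C, hC, hCG⟩ := exists_wLp_le_of_le_tsum_geometric (n := n) hp hr
  refine ⟨C * C, ENNReal.mul_ne_top hC hC, fun h G B hh hG => ?_⟩
  have hrow : ∀ a, wLp n p (fun x => ∑' b, G a b x) ≤ C * B * r ^ a := fun a => by
    rw [mul_assoc]
    exact hCG _ (G a) _ (fun x => le_rfl) (hG a)
  simpa only [mul_assoc] using hCG h _ (C * B) hh hrow

end WeakLp

theorem le_tsum_indicator_two_pow_mul {α : Type*} (g : α → ℝ≥0∞) {a : ℝ≥0∞} (ha : a ≠ 0)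
    (x : α) : {x | a < g x}.indicator g x
      ≤ ∑' k : ℕ, {x | 2 ^ k * a < g x}.indicator (fun _ => 2 ^ (k + 1) * a) x := by
  by_cases hax : a < g x
  swap
  · simp [indicator_of_notMem (show x ∉ {x | a < g x} from hax)]
  rw [indicator_of_mem (show x ∈ {x | a < g x} from hax)]
  by_contra! hlt
  -- otherwise every dyadic level `2 ^ k * a` lies below `g x`, and the series diverges
  have hlevel : ∀ k : ℕ, 2 ^ k * a < g x := by
    intro k
    induction k with
    | zero => simpa using hax
    | succ k ih =>
      calc 2 ^ (k + 1) * a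
          = {x | 2 ^ k * a < g x}.indicator (fun _ => (2 : ℝ≥0∞) ^ (k + 1) * a) x :=
            (indicator_of_mem (show x ∈ {x | 2 ^ k * a < g x} from ih)
              (fun _ => (2 : ℝ≥0∞) ^ (k + 1) * a)).symm
        _ ≤ _ := ENNReal.le_tsum k
        _ < g x := hlt
  have htop : ∑' k : ℕ, {x | 2 ^ k * a < g x}.indicator (fun _ => (2 : ℝ≥0∞) ^ (k + 1) * a) x
      = ∞ := by
    refine top_le_iff.1 ((ENNReal.tsum_const_eq_top_of_ne_zero ha).symm.le.trans
      (ENNReal.tsum_le_tsum fun k => ?_))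
    rw [indicator_of_mem (show x ∈ {x | 2 ^ k * a < g x} from hlevel k)]
    exact le_mul_of_one_le_left' (one_le_pow₀ one_le_two)
  exact (htop ▸ hlt).not_ge le_top

theorem two_pow_succ_mul_inv_two_pow_rpow (p : ℝ) (k : ℕ) :
    (2 : ℝ≥0∞) ^ (k + 1) * ((2 ^ k)⁻¹) ^ p = 2 * (2 ^ (1 - p)) ^ k := by
  rw [← ENNReal.rpow_natCast, ← ENNReal.rpow_natCast, ← ENNReal.rpow_natCast,
    ← ENNReal.rpow_neg, ← ENNReal.rpow_mul, ← ENNReal.rpow_mul,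
    ← ENNReal.rpow_add _ _ two_ne_zero ofNat_ne_top]
  nth_rw 2 [← ENNReal.rpow_one 2]
  rw [← ENNReal.rpow_add _ _ two_ne_zero ofNat_ne_top]
  congr 1
  push_cast
  ring

theorem lintegral_indicator_lt_le {α : Type*} [MeasurableSpace α] {μ : Measure α} {p : ℝ}
    (hp : 0 < p) {g : α → ℝ≥0∞} (hg : Measurable g) {W : ℝ≥0∞}
    (hW : ∀ t, t ≠ 0 → μ {x | t < g x} ≤ (W / t) ^ p) {a : ℝ≥0∞} (ha : a ≠ 0) :
    ∫⁻ x, {x | a < g x}.indicator g x ∂μ ≤ 2 * (1 - 2 ^ (1 - p))⁻¹ * a * (W / a) ^ p := by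
  have hmeas : ∀ t, MeasurableSet {x | t < g x} := fun t => hg measurableSet_Ioi
  calc ∫⁻ x, {x | a < g x}.indicator g x ∂μ
      ≤ ∫⁻ x, ∑' k : ℕ, {x | 2 ^ k * a < g x}.indicator (fun _ => 2 ^ (k + 1) * a) x ∂μ :=
        lintegral_mono (le_tsum_indicator_two_pow_mul g ha)
    _ = ∑' k : ℕ, 2 ^ (k + 1) * a * μ {x | 2 ^ k * a < g x} := by
        rw [lintegral_tsum fun k => (measurable_const.indicator (hmeas _)).aemeasurable]
        exact tsum_congr fun k => lintegral_indicator_const (hmeas _) _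
    _ ≤ ∑' k : ℕ, 2 ^ (k + 1) * a * (W / (2 ^ k * a)) ^ p := by
        gcongr with k
        exact hW _ (mul_ne_zero (pow_ne_zero k two_ne_zero) ha)
    _ = ∑' k : ℕ, 2 * a * (W / a) ^ p * (2 ^ (1 - p)) ^ k := by
        refine tsum_congr fun k => ?_
        have hdiv : W / (2 ^ k * a) = (2 ^ k)⁻¹ * (W / a) := by
          rw [ENNReal.div_eq_inv_mul, ENNReal.div_eq_inv_mul, ← mul_assoc,
            ENNReal.mul_inv (.inl (pow_ne_zero k two_ne_zero)) (.inl (pow_ne_top ofNat_ne_top))]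
        rw [hdiv, ENNReal.mul_rpow_of_nonneg _ _ hp.le]
        calc 2 ^ (k + 1) * a * (((2 : ℝ≥0∞) ^ k)⁻¹ ^ p * (W / a) ^ p)
            = (2 ^ (k + 1) * ((2 : ℝ≥0∞) ^ k)⁻¹ ^ p) * (a * (W / a) ^ p) := by ring
          _ = _ := by rw [two_pow_succ_mul_inv_two_pow_rpow]; ring
    _ = 2 * (1 - 2 ^ (1 - p))⁻¹ * a * (W / a) ^ p := by
        rw [ENNReal.tsum_mul_left, ENNReal.tsum_geometric]; ring

section Maximal

variable {n : ℕ}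

theorem maxFn_mono {g h : EuclideanSpace ℝ (Fin n) → ℝ≥0∞} (hgh : g ≤ h) :
    maxFn n g ≤ maxFn n h := fun _ =>
  iSup₂_mono fun _ _ => ENNReal.div_le_div_right (lintegral_mono fun y => hgh y) _

theorem maxFn_add_const_le {g : EuclideanSpace ℝ (Fin n) → ℝ≥0∞} (hg : Measurable g)
    (a : ℝ≥0∞) (x : EuclideanSpace ℝ (Fin n)) :
    maxFn n (fun y => g y + a) x ≤ maxFn n g x + a := by
  refine iSup₂_le fun r hr => ?_
  rw [lintegral_add_left hg, setLIntegral_const, ENNReal.add_div]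
  exact add_le_add (le_iSup₂_of_le r hr le_rfl) (ENNReal.div_le_of_le_mul le_rfl)

theorem exists_mul_volume_ball_lt_of_lt_maxFn {g : EuclideanSpace ℝ (Fin n) → ℝ≥0∞}
    {l : ℝ≥0∞} {x : EuclideanSpace ℝ (Fin n)} (hx : l < maxFn n g x) :
    ∃ r, 0 < r ∧ l * volume (ball x r) < ∫⁻ y in ball x r, g y := by
  simp only [maxFn, lt_iSup_iff] at hx
  obtain ⟨r, hr, hlt⟩ := hx
  exact ⟨r, hr, (ENNReal.lt_div_iff_mul_lt (.inl (measure_ball_pos volume x hr).ne')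
    (.inl measure_ball_lt_top.ne)).1 hlt⟩

theorem volume_closedBall_mul [NeZero n] (x : EuclideanSpace ℝ (Fin n)) {c s : ℝ} (hc : 0 ≤ c)
    (hs : 0 ≤ s) : volume (closedBall x (c * s)) = ENNReal.ofReal c ^ n * volume (ball x s) := by
  rw [Measure.addHaar_closedBall_mul volume x hc hs, Measure.addHaar_closedBall_eq_addHaar_ball,
    ← Measure.addHaar_ball_center volume x, finrank_euclideanSpace_fin, ENNReal.ofReal_pow hc]

theorem exists_radius_le_of_mul_volume_ball_le [NeZero n] {l I : ℝ≥0∞} (hl : l ≠ 0)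
    (hI : I ≠ ∞) : ∃ R : ℝ, ∀ (x : EuclideanSpace ℝ (Fin n)) (r : ℝ), 0 ≤ r →
      l * volume (ball x r) ≤ I → r ≤ R := by
  set c := volume (ball (0 : EuclideanSpace ℝ (Fin n)) 1)
  have hc : c ≠ 0 := (measure_ball_pos volume _ one_pos).ne'
  set V := I / (l * c)
  have hV : V ≠ ∞ := (ENNReal.div_lt_top hI (mul_ne_zero hl hc)).ne
  refine ⟨max 1 V.toReal, fun x r hr hle => ?_⟩
  rcases le_or_gt r 1 with h1 | h1
  · exact h1.trans (le_max_left _ _)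
  have hrV : ENNReal.ofReal (r ^ n) ≤ V := by
    rw [ENNReal.le_div_iff_mul_le (.inl (mul_ne_zero hl hc)) (.inr hI)]
    calc ENNReal.ofReal (r ^ n) * (l * c) = l * volume (ball x r) := by
          rw [Measure.addHaar_ball volume x hr, finrank_euclideanSpace_fin]; ring
      _ ≤ I := hle
  calc r ≤ r ^ n := le_self_pow₀ h1.le (NeZero.ne n)
    _ ≤ V.toReal := (ENNReal.ofReal_le_iff_le_toReal hV).1 hrV
    _ ≤ _ := le_max_right _ _

theorem mul_volume_lt_maxFn_le [NeZero n] (g : EuclideanSpace ℝ (Fin n) → ℝ≥0∞) (l : ℝ≥0∞) :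
    l * volume {x | l < maxFn n g x} ≤ 4 ^ n * ∫⁻ x, g x := by
  rcases eq_or_ne l 0 with rfl | hl0
  · simp
  rcases eq_or_ne l ∞ with rfl | hl
  · simp
  rcases eq_or_ne (∫⁻ x, g x) ∞ with hI | hI
  · simp [hI]
  set E := {x | l < maxFn n g x}
  choose! r hr0 hr using fun x (hx : x ∈ E) => exists_mul_volume_ball_lt_of_lt_maxFn hx
  obtain ⟨R, hR⟩ := exists_radius_le_of_mul_volume_ball_le (n := n) hl0 hI
  obtain ⟨u, huE, hdisj, hcov⟩ := Vitali.exists_disjoint_subfamily_covering_enlargement_closedBall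
    E id r R (fun x hx => hR x (r x) (hr0 x hx).le
      ((hr x hx).le.trans (setLIntegral_le_lintegral _ _))) 4 (by norm_num)
  have hdisj' : u.PairwiseDisjoint fun x => ball x (r x) :=
    hdisj.mono fun x => ball_subset_closedBall
  have : Countable u := (hdisj'.countable_of_isOpen (fun _ _ => isOpen_ball)
    fun x hx => nonempty_ball.2 (hr0 x (huE hx))).to_subtype
  calc l * volume E
      ≤ l * ∑' x : u, volume (closedBall (x : EuclideanSpace ℝ (Fin n)) (4 * r x)) := by
        gcongr
        refine (measure_mono fun y hy => ?_).trans (measure_iUnion_le _)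
        obtain ⟨x, hx, hsub⟩ := hcov y hy
        exact mem_iUnion.2 ⟨⟨x, hx⟩, hsub (mem_closedBall_self (hr0 y hy).le)⟩
    _ = 4 ^ n * ∑' x : u, l * volume (ball (x : EuclideanSpace ℝ (Fin n)) (r x)) := by
        rw [← ENNReal.tsum_mul_left, ← ENNReal.tsum_mul_left]
        refine tsum_congr fun x => ?_
        rw [volume_closedBall_mul _ (by norm_num) (hr0 _ (huE x.2)).le, ENNReal.ofReal_ofNat]
        ring
    _ ≤ 4 ^ n * ∑' x : u, ∫⁻ y in ball (x : EuclideanSpace ℝ (Fin n)) (r x), g y := by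
        gcongr with x
        exact (hr x (huE x.2)).le
    _ = 4 ^ n * ∫⁻ y in ⋃ x : u, ball (x : EuclideanSpace ℝ (Fin n)) (r x), g y := by
        rw [lintegral_iUnion (fun _ => measurableSet_ball) hdisj'.subtype]
    _ ≤ 4 ^ n * ∫⁻ y, g y := by
        gcongr
        exact Measure.restrict_le_self

theorem maxFn_le_maxFn_indicator_add {g : EuclideanSpace ℝ (Fin n) → ℝ≥0∞} (hg : Measurable g)
    (a : ℝ≥0∞) (x : EuclideanSpace ℝ (Fin n)) :
    maxFn n g x ≤ maxFn n ({x | a < g x}.indicator g) x + a := by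
  have hle : g ≤ fun y => {x | a < g x}.indicator g y + a := fun y => by
    by_cases hy : a < g y
    · simp [indicator_of_mem (show y ∈ {x | a < g x} from hy)]
    · simp [hy, not_lt.1 hy]
  exact (maxFn_mono hle x).trans (maxFn_add_const_le (hg.indicator (hg measurableSet_Ioi)) a x)

theorem volume_lt_maxFn_le [NeZero n] {p : ℝ} (hp : 0 < p) {g : EuclideanSpace ℝ (Fin n) → ℝ≥0∞}
    (hg : Measurable g) {l : ℝ≥0∞} (hl0 : l ≠ 0) (hl : l ≠ ∞) :
    volume {x | l < maxFn n g x}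
      ≤ 4 ^ n * (2 * (1 - 2 ^ (1 - p))⁻¹) * (wLp n p g / (l / 2)) ^ p := by
  set a := l / 2
  have ha0 : a ≠ 0 := ENNReal.div_ne_zero.2 ⟨hl0, ofNat_ne_top⟩
  have ha : a ≠ ∞ := ENNReal.div_ne_top hl two_ne_zero
  set g₁ := {x | a < g x}.indicator g
  have hsub : {x | l < maxFn n g x} ⊆ {x | a < maxFn n g₁ x} := fun x hx => by
    by_contra! hle
    refine (show l < maxFn n g x from hx).not_ge ?_
    calc maxFn n g x ≤ maxFn n g₁ x + a := maxFn_le_maxFn_indicator_add hg a x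
      _ ≤ a + a := by gcongr; exact not_lt.1 hle
      _ = l := ENNReal.add_halves l
  calc volume {x | l < maxFn n g x} ≤ volume {x | a < maxFn n g₁ x} := measure_mono hsub
    _ ≤ 4 ^ n * (∫⁻ x, g₁ x) / a := by
        rw [ENNReal.le_div_iff_mul_le (.inl ha0) (.inl ha), mul_comm]
        exact mul_volume_lt_maxFn_le g₁ a
    _ ≤ 4 ^ n * (2 * (1 - 2 ^ (1 - p))⁻¹ * a * (wLp n p g / a) ^ p) / a := by
        gcongr
        exact lintegral_indicator_lt_le hp hg (fun t ht => volume_lt_le_wLp_div_rpow hp g ht) ha0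
    _ = 4 ^ n * (2 * (1 - 2 ^ (1 - p))⁻¹) * (wLp n p g / a) ^ p := by
        rw [show 4 ^ n * (2 * (1 - 2 ^ (1 - p))⁻¹ * a * (wLp n p g / a) ^ p)
            = 4 ^ n * (2 * (1 - 2 ^ (1 - p))⁻¹) * (wLp n p g / a) ^ p * a by ring]
        exact ENNReal.mul_div_cancel_right ha0 ha

theorem exists_wLp_maxFn_le [NeZero n] {p : ℝ} (hp : 1 < p) :
    ∃ A : ℝ≥0∞, A ≠ ∞ ∧ ∀ g : EuclideanSpace ℝ (Fin n) → ℝ≥0∞, Measurable g →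
      wLp n p (maxFn n g) ≤ A * wLp n p g := by
  have hp0 : 0 < p := zero_lt_one.trans hp
  set K : ℝ≥0∞ := 4 ^ n * (2 * (1 - 2 ^ (1 - p))⁻¹)
  have hK : K ≠ ∞ := ENNReal.mul_ne_top (pow_ne_top ofNat_ne_top)
    (ENNReal.mul_ne_top ofNat_ne_top (inv_one_sub_two_rpow_ne_top (by linarith)))
  refine ⟨2 * K ^ (1 / p), ENNReal.mul_ne_top ofNat_ne_top
    (ENNReal.rpow_ne_top_of_nonneg (by positivity) hK), fun g hg => ?_⟩
  refine wLp_le_of_volume_lt_le hp0 fun l hl0 hl => (volume_lt_maxFn_le hp0 hg hl0 hl).trans_eq ?_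
  rw [ENNReal.div_eq_inv_mul, ENNReal.inv_div (.inl ofNat_ne_top) (.inl two_ne_zero),
    show 2 * K ^ (1 / p) * wLp n p g / l = K ^ (1 / p) * (2 / l * wLp n p g) by
      rw [ENNReal.div_eq_inv_mul, ENNReal.div_eq_inv_mul]; ring,
    ENNReal.mul_rpow_of_nonneg (K ^ (1 / p)) _ hp0.le, ← ENNReal.rpow_mul,
    one_div_mul_cancel hp0.ne', ENNReal.rpow_one]

end Maximal

theorem tsum_tsum_Icc_le_tsum_tsum_nat (f : ℤ → ℤ → ℝ≥0∞) (L jt : ℤ) :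
    ∑' j : {j : ℤ // L ≤ j}, ∑' js : {js : ℤ // jt ≤ js ∧ js ≤ j.1}, f j js
      ≤ ∑' a : ℕ, ∑' b : ℕ, f (jt + a + b) (jt + a) := by
  rw [← ENNReal.tsum_sigma' (fun i : Σ j : {j : ℤ // L ≤ j}, {js : ℤ // jt ≤ js ∧ js ≤ j.1} =>
    f i.1 i.2), ← ENNReal.tsum_prod]
  let e : (Σ j : {j : ℤ // L ≤ j}, {js : ℤ // jt ≤ js ∧ js ≤ j.1}) → ℕ × ℕ :=
    fun i => ((i.2.1 - jt).toNat, (i.1.1 - i.2.1).toNat)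
  have he : Function.Injective e := by
    rintro ⟨⟨j, hj⟩, ⟨js, hjs⟩⟩ ⟨⟨j', hj'⟩, ⟨js', hjs'⟩⟩ h
    simp only [e, Prod.mk.injEq] at h hjs hjs'
    obtain rfl : js = js' := by omega
    obtain rfl : j = j' := by omega
    rfl
  calc ∑' i : (Σ j : {j : ℤ // L ≤ j}, {js : ℤ // jt ≤ js ∧ js ≤ j.1}), f i.1 i.2
      = ∑' i, (fun ab : ℕ × ℕ => f (jt + ab.1 + ab.2) (jt + ab.1)) (e i) := by
        refine tsum_congr fun ⟨⟨j, hj⟩, ⟨js, hjs⟩⟩ => ?_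
        simp only [e] at hjs ⊢
        congr <;> omega
    _ ≤ _ := ENNReal.tsum_comp_le_tsum_of_injective he _

theorem tsum_Iic_le_tsum_nat (f : ℤ → ℝ≥0∞) (jt : ℤ) :
    ∑' j : {j : ℤ // j ≤ jt}, f j ≤ ∑' d : ℕ, f (jt - d) := by
  have he : Function.Injective fun j : {j : ℤ // j ≤ jt} => (jt - j).toNat := by
    rintro ⟨j, hj⟩ ⟨j', hj'⟩ h
    simp only at h
    exact Subtype.ext (by simp only; omega)
  calc ∑' j : {j : ℤ // j ≤ jt}, f j = ∑' j : {j : ℤ // j ≤ jt}, f (jt - (jt - j).toNat) :=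
        tsum_congr fun ⟨j, hj⟩ => by simp only; congr 1; omega
    _ ≤ _ := ENNReal.tsum_comp_le_tsum_of_injective he fun d => f (jt - d)

theorem tsum_Iic_mul_two_rpow_rpow_le (K : ℝ≥0∞) (β : ℝ) {q : ℝ} (hq : 0 < q) (jt : ℤ) :
    ∑' j : {j : ℤ // j ≤ jt}, (K * 2 ^ (-(β * ((jt : ℝ) - j)))) ^ q
      ≤ K ^ q * (1 - 2 ^ (-(β * q)))⁻¹ := by
  refine (tsum_Iic_le_tsum_nat (fun j => (K * 2 ^ (-(β * ((jt : ℝ) - j)))) ^ q) jt).trans_eq ?_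
  rw [← ENNReal.tsum_geometric, ← ENNReal.tsum_mul_left]
  refine tsum_congr fun d => ?_
  rw [ENNReal.mul_rpow_of_nonneg _ _ hq.le, ← ENNReal.rpow_mul, ← ENNReal.rpow_natCast,
    ← ENNReal.rpow_mul]
  congr 2
  push_cast
  ring

theorem le_iSup_tsum_rpow_rpow_inv {q : ℝ} (hq : 0 < q) (f : ℤ → ℤ → ℝ≥0∞) {js j : ℤ}
    (hj : js ≤ j) : f j js ≤ (⨆ js : ℤ, ∑' j : {j : ℤ // js ≤ j}, f j.1 js ^ q) ^ q⁻¹ :=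
  (ENNReal.le_rpow_inv_iff hq).2
    (le_iSup_of_le js (ENNReal.le_tsum (⟨j, hj⟩ : {j : ℤ // js ≤ j})))

theorem two_rpow_mul_le_of_two_rpow_mul_le {x z : ℝ} {W T : ℝ≥0∞} (h : 2 ^ z * W ≤ T) :
    (2 : ℝ≥0∞) ^ x * W ≤ 2 ^ (x - z) * T :=
  calc (2 : ℝ≥0∞) ^ x * W = 2 ^ (x - z) * (2 ^ z * W) := by
        rw [← mul_assoc, ← ENNReal.rpow_add _ _ two_ne_zero ofNat_ne_top, sub_add_cancel]
    _ ≤ 2 ^ (x - z) * T := by gcongr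

theorem two_rpow_mul_two_rpow_mul_le {β m m' : ℝ} (hm : 1 / 2 ≤ m) (hm' : 0 ≤ m')
    {j' jt js j : ℝ} (hj' : j' ≤ jt) (hj : js ≤ j) {W T : ℝ≥0∞}
    (hW : 2 ^ (2 * (j - js) * m) * 2 ^ (j * (β - 1)) * W ≤ T) :
    2 ^ (j' - j) * 2 ^ (2 * (j - js) * (1 - m)) * W
      ≤ 2 ^ (-(β * (jt - j')) - (2 * (j' - jt) * m' + j' * (β - 1))) *
        2 ^ (-(β * (js - jt))) * 2 ^ (-(β * (j - js))) * T := by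
  rw [← ENNReal.rpow_add _ _ two_ne_zero ofNat_ne_top] at hW ⊢
  rw [← ENNReal.rpow_add _ _ two_ne_zero ofNat_ne_top,
    ← ENNReal.rpow_add _ _ two_ne_zero ofNat_ne_top]
  refine (two_rpow_mul_le_of_two_rpow_mul_le hW).trans ?_
  gcongr
  · norm_num
  · nlinarith [mul_nonneg (sub_nonneg.2 hj) (by linarith : (0 : ℝ) ≤ 2 * m - 1),
      mul_nonneg (sub_nonneg.2 hj') hm']

theorem two_rpow_neg_mul_cast_add_sub (β : ℝ) (k : ℤ) (a : ℕ) :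
    (2 : ℝ≥0∞) ^ (-(β * (((k + a : ℤ) : ℝ) - k))) = (2 ^ (-β)) ^ a := by
  rw [← ENNReal.rpow_natCast, ← ENNReal.rpow_mul]
  congr 1
  push_cast
  ring

theorem exists_weighted_wLp_le_of_le_tsum {n : ℕ} {p β m m' : ℝ} (hp : 0 < p) (hβ : 0 < β)
    (hm : 1 / 2 ≤ m) (hm' : 0 ≤ m') :
    ∃ C : ℝ≥0∞, C ≠ ∞ ∧ ∀ (v : ℤ → ℤ → EuclideanSpace ℝ (Fin n) → ℝ≥0∞)
      (F : EuclideanSpace ℝ (Fin n) → ℝ≥0∞) (c T : ℝ≥0∞) (L jt j' : ℤ), c ≠ ∞ → j' ≤ jt →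
      (∀ js j : ℤ, js ≤ j →
        2 ^ (2 * ((j : ℝ) - js) * m) * 2 ^ ((j : ℝ) * (β - 1)) * wLp n p (v j js) ≤ T) →
      (∀ x, F x ≤ c * ∑' j : {j : ℤ // L ≤ j}, ∑' js : {js : ℤ // jt ≤ js ∧ js ≤ j.1},
        (2 : ℝ≥0∞) ^ ((j' : ℝ) - j.1) * 2 ^ (2 * ((j.1 : ℝ) - js.1) * (1 - m)) * v j.1 js.1 x) →
      2 ^ (2 * ((j' : ℝ) - jt) * m') * 2 ^ ((j' : ℝ) * (β - 1)) * wLp n p F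
        ≤ C * c * T * 2 ^ (-(β * ((jt : ℝ) - j'))) := by
  obtain ⟨C, hC, hCG⟩ := exists_wLp_le_of_le_tsum_tsum_geometric (n := n) hp
    (ENNReal.rpow_lt_one_of_one_lt_of_neg one_lt_two (neg_neg_of_pos hβ))
  refine ⟨C, hC, fun v F c T L jt j' hc hj' hv hF => ?_⟩
  set E : ℝ := 2 * ((j' : ℝ) - jt) * m' + (j' : ℝ) * (β - 1)
  set κ : ℤ → ℤ → ℝ≥0∞ := fun j js => 2 ^ ((j' : ℝ) - j) * 2 ^ (2 * ((j : ℝ) - js) * (1 - m))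
  have hκ : ∀ j js, κ j js ≠ ∞ := fun j js => by
    simp [κ, ENNReal.mul_eq_top, ENNReal.rpow_eq_top_iff]
  set G : ℕ → ℕ → EuclideanSpace ℝ (Fin n) → ℝ≥0∞ := fun a b x =>
    c * (κ (jt + a + b) (jt + a) * v (jt + a + b) (jt + a) x)
  have hFG : ∀ x, F x ≤ ∑' a, ∑' b, G a b x := fun x => by
    refine (hF x).trans ((mul_le_mul_right (tsum_tsum_Icc_le_tsum_tsum_nat
      (fun j js => κ j js * v j js x) L jt) c).trans_eq ?_)
    simp only [G, ← ENNReal.tsum_mul_left]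
  have hG : ∀ a b, wLp n p (G a b)
      ≤ c * T * 2 ^ (-(β * ((jt : ℝ) - j')) - E) * (2 ^ (-β)) ^ a * (2 ^ (-β)) ^ b := by
    intro a b
    have hab := two_rpow_mul_two_rpow_mul_le (β := β) (j' := j') (jt := jt)
      (js := ((jt + a : ℤ) : ℝ)) (j := ((jt + a + b : ℤ) : ℝ)) hm hm'
      (by exact_mod_cast hj') (by push_cast; linarith [(Nat.cast_nonneg b : (0 : ℝ) ≤ b)])
      (hv (jt + a) (jt + a + b) (by omega))
    rw [two_rpow_neg_mul_cast_add_sub, two_rpow_neg_mul_cast_add_sub] at hab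
    refine ((wLp_const_mul_le hp _ hc).trans (mul_le_mul_right
      ((wLp_const_mul_le hp _ (hκ _ _)).trans hab) c)).trans_eq ?_
    ring
  calc 2 ^ (2 * ((j' : ℝ) - jt) * m') * 2 ^ ((j' : ℝ) * (β - 1)) * wLp n p F
      = 2 ^ E * wLp n p F := by rw [ENNReal.rpow_add _ _ two_ne_zero ofNat_ne_top]
    _ ≤ 2 ^ E * (C * (c * T * 2 ^ (-(β * ((jt : ℝ) - j')) - E))) := by
        gcongr
        exact hCG F G _ hFG hG
    _ = C * c * T * 2 ^ (-(β * ((jt : ℝ) - j'))) := by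
        rw [show 2 ^ E * (C * (c * T * 2 ^ (-(β * ((jt : ℝ) - j')) - E)))
            = C * c * T * (2 ^ E * 2 ^ (-(β * ((jt : ℝ) - j')) - E)) by ring,
          ← ENNReal.rpow_add _ _ two_ne_zero ofNat_ne_top, add_sub_cancel]

theorem exists_pos_mul_le_of_le_mul {D X Y : ℝ≥0∞} (hD : D ≠ ∞) (h : X ≤ D * Y) :
    ∃ C : NNReal, 0 < C ∧ X ≤ C * Y := by
  refine ⟨D.toNNReal + 1, by positivity, h.trans ?_⟩
  gcongr
  rw [← ENNReal.coe_toNNReal hD]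
  exact_mod_cast le_self_add

theorem couple_small_time_second_estimate_general (n : ℕ) (hn : 1 ≤ n) (p q m' m : ℝ)
    (hp : 1 < p) (hq : 1 ≤ q) (hm'0 : 0 ≤ m') (hm : 1 < m)
    (C₀ : NNReal)
    (u : ℤ → ℤ → EuclideanSpace ℝ (Fin n) → ℝ≥0∞)
    (F : ℤ → ℤ → EuclideanSpace ℝ (Fin n) → ℝ≥0∞)
    (hu : ∀ j js, Measurable (u j js))
    (hFu : ∀ (jt j' : ℤ), j' ≤ jt → ∀ x : EuclideanSpace ℝ (Fin n),
      F j' jt x ≤ (C₀ : ℝ≥0∞) *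
        ∑' j : {j : ℤ // j' - 2 ≤ j}, ∑' js : {js : ℤ // jt ≤ js ∧ js ≤ j.1},
          (2 : ℝ≥0∞) ^ ((j' : ℝ) - (j.1 : ℝ)) *
            (2 : ℝ≥0∞) ^ (2 * ((j.1 : ℝ) - (js.1 : ℝ)) * (1 - m)) *
            maxFn n (u j.1 js.1) x) :
    ∃ C : NNReal, 0 < C ∧
      (⨆ jt : ℤ, ∑' j' : {j' : ℤ // j' ≤ jt},
          ((2 : ℝ≥0∞) ^ (2 * ((j'.1 : ℝ) - (jt : ℝ)) * m') *
            (2 : ℝ≥0∞) ^ ((j'.1 : ℝ) * ((n : ℝ) / p - 1)) * wLp n p (F j'.1 jt)) ^ q)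
        ≤ (C : ℝ≥0∞) *
          ⨆ js : ℤ, ∑' j : {j : ℤ // js ≤ j},
            ((2 : ℝ≥0∞) ^ (2 * ((j.1 : ℝ) - (js : ℝ)) * m) *
              (2 : ℝ≥0∞) ^ ((j.1 : ℝ) * ((n : ℝ) / p - 1)) * wLp n p (u j.1 js)) ^ q := by
  have : NeZero n := ⟨by omega⟩
  have hq0 : 0 < q := by linarith
  have hβ : 0 < (n : ℝ) / p := div_pos (by exact_mod_cast hn) (by linarith)
  obtain ⟨A, hA, hM⟩ := exists_wLp_maxFn_le (n := n) hp
  obtain ⟨C, hC, hCF⟩ := exists_weighted_wLp_le_of_le_tsum (n := n) (p := p) (m := m)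
    (by linarith) hβ (by linarith) hm'0
  set w : ℤ → ℤ → ℝ≥0∞ := fun j js =>
    2 ^ (2 * ((j : ℝ) - js) * m) * 2 ^ ((j : ℝ) * ((n : ℝ) / p - 1))
  set S := ⨆ js : ℤ, ∑' j : {j : ℤ // js ≤ j}, (w j.1 js * wLp n p (u j.1 js)) ^ q
  have hv : ∀ js j : ℤ, js ≤ j → w j js * wLp n p (maxFn n (u j js)) ≤ A * S ^ q⁻¹ :=
    fun js j hj => ((mul_le_mul_right (hM _ (hu j js)) _).trans_eq (mul_left_comm _ _ _)).trans
      (mul_le_mul_right (le_iSup_tsum_rpow_rpow_inv hq0 (fun j js => w j js * wLp n p (u j js))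
        hj) A)
  refine exists_pos_mul_le_of_le_mul (D := (C * C₀ * A) ^ q * (1 - 2 ^ (-((n : ℝ) / p * q)))⁻¹)
    (ENNReal.mul_ne_top (by finiteness)
      (inv_one_sub_two_rpow_ne_top (neg_neg_of_pos (mul_pos hβ hq0))))
    (iSup_le fun jt => ?_)
  calc _ ≤ ∑' j' : {j' : ℤ // j' ≤ jt},
          (C * C₀ * (A * S ^ q⁻¹) * 2 ^ (-((n : ℝ) / p * ((jt : ℝ) - j')))) ^ q :=
        ENNReal.tsum_le_tsum fun j' => ENNReal.rpow_le_rpow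
          (hCF _ _ _ _ _ jt j' coe_ne_top j'.2 hv (hFu jt j' j'.2)) hq0.le
    _ ≤ (C * C₀ * (A * S ^ q⁻¹)) ^ q * (1 - 2 ^ (-((n : ℝ) / p * q)))⁻¹ :=
        tsum_Iic_mul_two_rpow_rpow_le _ _ hq0 jt
    _ = _ := by
        rw [← mul_assoc, ENNReal.mul_rpow_of_nonneg _ _ hq0.le, ← ENNReal.rpow_mul,
          inv_mul_cancel₀ hq0.ne', ENNReal.rpow_one]
        ring

/-- Section 5 (second small-time part of the couple-product flow): if for `j' ≤ j_t`
`F_{j',j_t} ≤ C₀ ∑_{j≥j'-2} ∑_{j_t≤j_s≤j} 2^{j'-j} 2^{2(j-j_s)(1-m)} M u_{j,j_s}` pointwise,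
then
`sup_{j_t} ∑_{j'≤j_t} (2^{2(j'-j_t)m'} 2^{j'(n/p-1)} ‖F_{j',j_t}‖_{L^{p,∞}})^q
  ≤ C sup_{j_s} ∑_{j≥j_s} (2^{2(j-j_s)m} 2^{j(n/p-1)} ‖u_{j,j_s}‖_{L^{p,∞}})^q`. -/
theorem couple_small_time_second_estimate (n : ℕ) (hn : 1 ≤ n) (p q m' m : ℝ)
    (hp : 1 < p) (hq : 1 ≤ q) (hm'0 : 0 ≤ m') (hm' : m' < 1 / 2) (hm : 1 < m)
    (C₀ : NNReal) (hC₀ : 0 < C₀)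
    (u : ℤ → ℤ → EuclideanSpace ℝ (Fin n) → ℝ≥0∞)
    (F : ℤ → ℤ → EuclideanSpace ℝ (Fin n) → ℝ≥0∞)
    (hu : ∀ j js, Measurable (u j js)) (hF : ∀ j' jt, Measurable (F j' jt))
    (hFu : ∀ (jt j' : ℤ), j' ≤ jt → ∀ x : EuclideanSpace ℝ (Fin n),
      F j' jt x ≤ (C₀ : ℝ≥0∞) *
        ∑' j : {j : ℤ // j' - 2 ≤ j}, ∑' js : {js : ℤ // jt ≤ js ∧ js ≤ j.1},
          (2 : ℝ≥0∞) ^ ((j' : ℝ) - (j.1 : ℝ)) *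
            (2 : ℝ≥0∞) ^ (2 * ((j.1 : ℝ) - (js.1 : ℝ)) * (1 - m)) *
            maxFn n (u j.1 js.1) x) :
    ∃ C : NNReal, 0 < C ∧
      (⨆ jt : ℤ, ∑' j' : {j' : ℤ // j' ≤ jt},
          ((2 : ℝ≥0∞) ^ (2 * ((j'.1 : ℝ) - (jt : ℝ)) * m') *
            (2 : ℝ≥0∞) ^ ((j'.1 : ℝ) * ((n : ℝ) / p - 1)) * wLp n p (F j'.1 jt)) ^ q)
        ≤ (C : ℝ≥0∞) *
          ⨆ js : ℤ, ∑' j : {j : ℤ // js ≤ j},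
            ((2 : ℝ≥0∞) ^ (2 * ((j.1 : ℝ) - (js : ℝ)) * m) *
              (2 : ℝ≥0∞) ^ ((j.1 : ℝ) * ((n : ℝ) / p - 1)) * wLp n p (u j.1 js)) ^ q :=
  couple_small_time_second_estimate_general n hn p q m' m hp hq hm'0 hm C₀ u F hu hFu
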